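/- arXiv:2009.08265 — 3 statements merged into one kernel-verified Lean document; each statement's English description precedes it below -/
import Mathlib

section
/- Let f : [0,1]^d → ℝ be twice differentiable with ‖∇²f‖_∞ ≤ 2L on a cube B with side length h and center c, and let θ = (θ₁,…,θ_d) be the coefficients of the L²-best affine approximation of f on B. If x₀ ∈ B is any point where f(x₀) equals its affine approximation value, then ‖∇f(x₀) − θ‖_∞ ≤ 4√3 · L h. -/
/-!
The coefficient `θ i` is the least-squares slope of `f` against the weight `x i - c i`. On the cube
the moments are `∫ (x i - c i) = 0` and `∫ (x j - c j) * (x i - c i) = δᵢⱼ h ^ (d + 2) / 12`, so an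
affine function `α + φ (x - c)` has slope exactly `φ (Pi.single i 1)`. Splitting `f` into its
first-order Taylor polynomial at `x₀` and a remainder bounded by `L h²` on the cube, the difference
`θ i - ∂ᵢ f x₀` is the slope of the remainder, at most `L h² · (h / 2) · h ^ d / (h ^ (d + 2) / 12)
= 6 L h ≤ 4 √3 L h`.
-/

open Set MeasureTheory

lemma setIntegral_Icc_pi_prod {ι : Type*} [Fintype ι] (a b : ι → ℝ) (F : ι → ℝ → ℝ) :
    ∫ x in Icc a b, ∏ k, F k (x k) = ∏ k, ∫ t in Icc (a k) (b k), F k t := by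
  rw [← pi_univ_Icc, volume_pi, Measure.restrict_pi_pi, integral_fintype_prod_eq_prod]

section Interval

variable (c : ℝ) {h : ℝ}

lemma setIntegral_Icc_centered_one (hh : 0 ≤ h) :
    ∫ _ in Icc (c - h / 2) (c + h / 2), (1 : ℝ) = h := by
  rw [setIntegral_const, smul_eq_mul, mul_one, Real.volume_real_Icc]
  rw [show c + h / 2 - (c - h / 2) = h by ring, max_eq_left hh]

lemma setIntegral_Icc_centered_sub (hh : 0 ≤ h) :
    ∫ t in Icc (c - h / 2) (c + h / 2), (t - c) = 0 := by
  rw [integral_Icc_eq_integral_Ioc, ← intervalIntegral.integral_of_le (by linarith),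
    intervalIntegral.integral_comp_sub_right (fun t => t) c, integral_id]
  ring

lemma setIntegral_Icc_centered_sub_sq (hh : 0 ≤ h) :
    ∫ t in Icc (c - h / 2) (c + h / 2), (t - c) ^ 2 = h * (h ^ 2 / 12) := by
  rw [integral_Icc_eq_integral_Ioc, ← intervalIntegral.integral_of_le (by linarith),
    intervalIntegral.integral_comp_sub_right (fun t => t ^ 2) c, integral_pow]
  ring

end Interval

def cube {ι : Type*} (c : ι → ℝ) (h : ℝ) : Set (ι → ℝ) :=
  Icc (fun j => c j - h / 2) (fun j => c j + h / 2)

namespace cube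

variable {ι : Type*} (c : ι → ℝ) {h : ℝ}

lemma abs_sub_center_le {x : ι → ℝ} (hx : x ∈ cube c h) (i : ι) : |x i - c i| ≤ h / 2 := by
  have := hx.1 i; have := hx.2 i
  rw [abs_le]; constructor <;> linarith

variable [Fintype ι]

lemma setIntegral_prod (F : ι → ℝ → ℝ) :
    ∫ x in cube c h, ∏ k, F k (x k) = ∏ k, ∫ t in Icc (c k - h / 2) (c k + h / 2), F k t :=
  setIntegral_Icc_pi_prod _ _ F

lemma _root_.Continuous.integrableOn_cube {g : (ι → ℝ) → ℝ} (hg : Continuous g) :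
    IntegrableOn g (cube c h) :=
  hg.integrableOn_Icc

lemma norm_sub_le {x y : ι → ℝ} (hx : x ∈ cube c h) (hy : y ∈ cube c h) (hh : 0 ≤ h) :
    ‖x - y‖ ≤ h := by
  refine (pi_norm_le_iff_of_nonneg hh).2 fun i => ?_
  have := abs_sub_center_le c hx i; have := abs_sub_center_le c hy i
  rw [Pi.sub_apply, Real.norm_eq_abs, abs_le] at *
  constructor <;> linarith

lemma volume_real (hh : 0 ≤ h) : volume.real (cube c h) = h ^ Fintype.card ι := by
  rw [measureReal_def, cube, Real.volume_Icc_pi_toReal fun j => by dsimp; linarith]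
  simp

lemma setIntegral_sub_center (hh : 0 ≤ h) (i : ι) : ∫ x in cube c h, (x i - c i) = 0 := by
  classical
  have hprod : ∀ x : ι → ℝ, x i - c i = ∏ k, if k = i then x k - c k else 1 := by
    intro x; rw [Finset.prod_ite_eq' Finset.univ i]; simp
  simp_rw [hprod, setIntegral_prod c fun k t => if k = i then t - c k else 1]
  refine Finset.prod_eq_zero (Finset.mem_univ i) ?_
  simpa using setIntegral_Icc_centered_sub (c i) hh

lemma setIntegral_mul_sub_center (hh : 0 ≤ h) [DecidableEq ι] (i j : ι) :
    ∫ x in cube c h, (x j - c j) * (x i - c i) =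
      if j = i then h ^ 2 / 12 * h ^ Fintype.card ι else 0 := by
  have hprod : ∀ x : ι → ℝ, (x j - c j) * (x i - c i) =
      ∏ k, (if k = j then x k - c k else 1) * (if k = i then x k - c k else 1) := by
    intro x
    rw [Finset.prod_mul_distrib, Finset.prod_ite_eq' Finset.univ j,
      Finset.prod_ite_eq' Finset.univ i]
    simp
  simp_rw [hprod, setIntegral_prod c fun k t =>
    (if k = j then t - c k else 1) * (if k = i then t - c k else 1)]
  split_ifs with hji
  · subst hji
    have hfactor : ∀ k, ∫ t in Icc (c k - h / 2) (c k + h / 2),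
        (if k = j then t - c k else 1) * (if k = j then t - c k else 1) =
          h * if k = j then h ^ 2 / 12 else 1 := by
      intro k
      split_ifs
      · simp_rw [← sq]; exact setIntegral_Icc_centered_sub_sq (c k) hh
      · simpa using setIntegral_Icc_centered_one (c k) hh
    simp_rw [hfactor, Finset.prod_mul_distrib, Finset.prod_ite_eq' Finset.univ j]
    simp [mul_comm]
  · refine Finset.prod_eq_zero (Finset.mem_univ j) ?_
    simpa [hji] using setIntegral_Icc_centered_sub (c j) hh

lemma setIntegral_affine_mul_sub_center (hh : 0 ≤ h) [DecidableEq ι] (α : ℝ)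
    (φ : (ι → ℝ) →L[ℝ] ℝ) (i : ι) :
    ∫ x in cube c h, (α + φ (x - c)) * (x i - c i) =
      φ (Pi.single i 1) * (h ^ 2 / 12 * h ^ Fintype.card ι) := by
  have hexpand : ∀ x : ι → ℝ, (α + φ (x - c)) * (x i - c i) =
      α * (x i - c i) + ∑ j, φ (Pi.single j 1) * ((x j - c j) * (x i - c i)) := by
    intro x
    conv_lhs => rw [pi_eq_sum_univ' (x - c)]
    simp only [map_sum, map_smul, smul_eq_mul, Pi.sub_apply, add_mul, Finset.sum_mul]
    congr 1
    exact Finset.sum_congr rfl fun j _ => by ring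
  have hint : ∀ j, IntegrableOn (fun x : ι → ℝ => φ (Pi.single j 1) * ((x j - c j) * (x i - c i)))
      (cube c h) := fun j => Continuous.integrableOn_cube c (by fun_prop)
  simp_rw [hexpand]
  rw [integral_add (Continuous.integrableOn_cube c (by fun_prop))
      (integrable_finsetSum _ fun j _ => hint j),
    integral_finsetSum _ fun j _ => hint j, integral_const_mul, setIntegral_sub_center c hh]
  simp_rw [integral_const_mul, setIntegral_mul_sub_center c hh]
  simp

lemma abs_setIntegral_mul_sub_center_le (hh : 0 ≤ h) {g : (ι → ℝ) → ℝ} {M : ℝ}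
    (hg : ∀ x ∈ cube c h, |g x| ≤ M) (hM : 0 ≤ M) (i : ι) :
    |∫ x in cube c h, g x * (x i - c i)| ≤ M * (h / 2) * h ^ Fintype.card ι := by
  rw [← volume_real c hh, ← Real.norm_eq_abs]
  refine norm_setIntegral_le_of_norm_le_const isCompact_Icc.measure_lt_top fun x hx => ?_
  rw [Real.norm_eq_abs, abs_mul]
  exact mul_le_mul (hg x hx) (abs_sub_center_le c hx i) (abs_nonneg _) hM

lemma setIntegral_sub_mul_sub_center (hh : 0 ≤ h) [DecidableEq ι] {f : (ι → ℝ) → ℝ}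
    (hf : Continuous f) (θ₀ : ℝ) (x₀ : ι → ℝ) (φ : (ι → ℝ) →L[ℝ] ℝ) (i : ι) :
    ∫ x in cube c h, (f x - θ₀) * (x i - c i) =
      (∫ x in cube c h, (f x - f x₀ - φ (x - x₀)) * (x i - c i)) +
        φ (Pi.single i 1) * (h ^ 2 / 12 * h ^ Fintype.card ι) := by
  have hsplit : ∀ x, (f x - θ₀) * (x i - c i) = (f x - f x₀ - φ (x - x₀)) * (x i - c i) +
      (f x₀ - θ₀ + φ (c - x₀) + φ (x - c)) * (x i - c i) := by
    intro x
    rw [show x - x₀ = (x - c) + (c - x₀) by abel, map_add]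
    ring
  simp_rw [hsplit]
  rw [integral_add (Continuous.integrableOn_cube c (by fun_prop))
    (Continuous.integrableOn_cube c (by fun_prop)), setIntegral_affine_mul_sub_center c hh]

end cube

theorem stmt_5_general (d : ℕ) (L h : ℝ) (hL : 0 < L) (hh : 0 < h)
    (c : Fin d → ℝ) (f : (Fin d → ℝ) → ℝ)
    (B : Set (Fin d → ℝ))
    (hB : B = Icc (fun j => c j - h / 2) (fun j => c j + h / 2))
    (hdiff : Differentiable ℝ f)
    (hsmooth : ∀ x₁ ∈ B, ∀ x₂ ∈ B,
      |f x₁ - f x₂ - fderiv ℝ f x₂ (x₁ - x₂)| ≤ L * ‖x₁ - x₂‖ ^ 2)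
    (θ₀ : ℝ) (θ : Fin d → ℝ)
    (hθ : ∀ i, θ i =
      (∫ x in B, (f x - θ₀) * (x i - c i)) / (∫ x in B, (x i - c i) ^ 2))
    (x₀ : Fin d → ℝ) (hx₀ : x₀ ∈ B) :
    ∀ i, |fderiv ℝ f x₀ (Pi.single i 1) - θ i| ≤ 4 * Real.sqrt 3 * L * h := by
  intro i
  change B = cube c h at hB
  subst hB
  set V := h ^ 2 / 12 * h ^ d with hV
  have hVpos : 0 < V := by positivity
  have hsecond : ∫ x in cube c h, (x i - c i) ^ 2 = V := by
    simpa [← sq] using cube.setIntegral_mul_sub_center c hh.le i i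
  have hremainder : ∀ x ∈ cube c h, |f x - f x₀ - fderiv ℝ f x₀ (x - x₀)| ≤ L * h ^ 2 :=
    fun x hx => (hsmooth x hx x₀ hx₀).trans <| by
      gcongr; exact cube.norm_sub_le c hx hx₀ hh.le
  have hbound := cube.abs_setIntegral_mul_sub_center_le c hh.le hremainder (by positivity) i
  rw [hθ i, cube.setIntegral_sub_mul_sub_center c hh.le hdiff.continuous θ₀ x₀ (fderiv ℝ f x₀) i,
    hsecond, Fintype.card_fin, ← hV]
  rw [Fintype.card_fin] at hbound
  have hsqrt : 3 / 2 ≤ Real.sqrt 3 := Real.le_sqrt_of_sq_le (by norm_num)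
  calc _ = |∫ x in cube c h, (f x - f x₀ - fderiv ℝ f x₀ (x - x₀)) * (x i - c i)| / V := by
        rw [add_div, mul_div_cancel_right₀ _ hVpos.ne', sub_add_cancel_right, abs_neg, abs_div,
          abs_of_pos hVpos]
    _ ≤ L * h ^ 2 * (h / 2) * h ^ d / V := by gcongr
    _ = 6 * L * h := by rw [hV]; field_simp; ring
    _ ≤ 4 * Real.sqrt 3 * L * h := by gcongr; linarith

theorem stmt_5 (d : ℕ) (hd : 1 ≤ d) (L h : ℝ) (hL : 0 < L) (hh : 0 < h)
    (c : Fin d → ℝ) (f : (Fin d → ℝ) → ℝ)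
    (B : Set (Fin d → ℝ))
    (hB : B = Icc (fun j => c j - h / 2) (fun j => c j + h / 2))
    (hdiff : Differentiable ℝ f)
    (hsmooth : ∀ x₁ ∈ B, ∀ x₂ ∈ B,
      |f x₁ - f x₂ - fderiv ℝ f x₂ (x₁ - x₂)| ≤ L * ‖x₁ - x₂‖ ^ 2)
    (θ₀ : ℝ) (θ : Fin d → ℝ)
    (hθ₀ : θ₀ = (1 / h ^ d) * ∫ x in B, f x)
    (hθ : ∀ i, θ i =
      (∫ x in B, (f x - θ₀) * (x i - c i)) / (∫ x in B, (x i - c i) ^ 2))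
    (x₀ : Fin d → ℝ) (hx₀ : x₀ ∈ B)
    (heq : f x₀ = θ₀ + ∑ i, θ i * (x₀ i - c i)) :
    ∀ i, |fderiv ℝ f x₀ (Pi.single i 1) - θ i| ≤ 4 * Real.sqrt 3 * L * h :=
  stmt_5_general d L h hL hh c f B hB hdiff hsmooth θ₀ θ hθ x₀ hx₀
end

section
/- Let X have density μ on a cube B ⊆ ℝ^d of side length h with center c_B, where μ is L_μ-Lipschitz in ‖·‖_∞ and μ(x) ≥ μ_m > 0. With U = (X − c_B)/h, for any i ≠ j, |E[U_i U_j | X ∈ B]| ≤ L_μ h / (8 μ_m). -/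
open Set MeasureTheory Metric

/-!
Reflecting the cube in the hyperplane `x i = c i` preserves Lebesgue measure and changes the
sign of `U i * U j`, so `∫_B U i * U j = 0`. The density may therefore be replaced by
`μ - μ c` in the numerator, which is then at most `(1/4) (Lμ h / 2) h ^ d` because the cube is the
sup-norm ball of radius `h / 2` about `c`; the denominator is at least `μm h ^ d`.
-/

section Reflection

variable {ι : Type*} [DecidableEq ι]

noncomputable def reflectCoord (i : ι) (a : ℝ) (x : ι → ℝ) : ι → ℝ :=
  Function.update x i (2 * a - x i)

theorem reflectCoord_apply (i : ι) (a : ℝ) (x : ι → ℝ) (k : ι) :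
    reflectCoord i a x k = if k = i then 2 * a - x k else x k := by
  by_cases hk : k = i
  · subst hk; simp [reflectCoord]
  · simp [reflectCoord, hk]

theorem reflectCoord_involutive (i : ι) (a : ℝ) : Function.Involutive (reflectCoord i a) := by
  intro x
  ext k
  simp only [reflectCoord_apply]
  split_ifs <;> ring

theorem measurePreserving_reflectCoord [Fintype ι] (i : ι) (a : ℝ) :
    MeasurePreserving (reflectCoord i a) := by
  have hcoord (k : ι) : MeasurePreserving (fun t : ℝ => if k = i then 2 * a - t else t) := by
    split_ifs
    · exact volume.measurePreserving_sub_left (2 * a)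
    · exact .id volume
  convert volume_preserving_pi hcoord using 1
  ext x k
  exact reflectCoord_apply i a x k

theorem reflectCoord_preimage_closedBall [Fintype ι] (i : ι) (c : ι → ℝ) {r : ℝ} (hr : 0 ≤ r) :
    reflectCoord i (c i) ⁻¹' closedBall c r = closedBall c r := by
  ext x
  simp only [mem_preimage, mem_closedBall, dist_pi_le_iff hr, reflectCoord_apply, Real.dist_eq]
  refine forall_congr' fun k => ?_
  split_ifs with hk
  · subst hk
    rw [show 2 * c k - x k - c k = -(x k - c k) by ring, abs_neg]
  · rfl

end Reflection

theorem setIntegral_eq_zero_of_comp_eq_neg {α E : Type*} [MeasurableSpace α]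
    [NormedAddCommGroup E] [NormedSpace ℝ E] {μ : Measure α} {T : α → α} {s : Set α} {f : α → E}
    (hT : MeasurePreserving T μ μ) (hTe : MeasurableEmbedding T) (hs : T ⁻¹' s = s)
    (hf : ∀ x, f (T x) = -f x) : ∫ x in s, f x ∂μ = 0 := by
  have h := hT.setIntegral_preimage_emb hTe f s
  simp only [hs, hf, integral_neg] at h
  linear_combination (norm := module) (-(1 / 2 : ℝ)) • h

theorem setIntegral_closedBall_eq_zero_of_reflectCoord {ι E : Type*} [Fintype ι] [DecidableEq ι]
    [NormedAddCommGroup E] [NormedSpace ℝ E] (i : ι) (c : ι → ℝ) {r : ℝ} (hr : 0 ≤ r)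
    {f : (ι → ℝ) → E} (hf : ∀ x, f (reflectCoord i (c i) x) = -f x) :
    ∫ x in closedBall c r, f x = 0 :=
  setIntegral_eq_zero_of_comp_eq_neg (measurePreserving_reflectCoord i (c i))
    (MeasurableEquiv.ofInvolutive _ (reflectCoord_involutive i (c i))
      (measurePreserving_reflectCoord i (c i)).measurable).measurableEmbedding
    (reflectCoord_preimage_closedBall i c hr) hf

theorem abs_setIntegral_mul_le_of_setIntegral_eq_zero {α : Type*} [MeasurableSpace α]
    {μ : Measure α} {s : Set α} {g f : α → ℝ} {m G E : ℝ} (hs : μ s < ⊤)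
    (hg : IntegrableOn g s μ) (hgf : IntegrableOn (fun x => g x * f x) s μ)
    (hg₀ : ∫ x in s, g x ∂μ = 0) (hgG : ∀ x ∈ s, |g x| ≤ G) (hfE : ∀ x ∈ s, |f x - m| ≤ E) :
    |∫ x in s, g x * f x ∂μ| ≤ G * E * μ.real s := by
  have hcentered : ∫ x in s, g x * f x ∂μ = ∫ x in s, g x * (f x - m) ∂μ := by
    simp only [mul_sub]
    rw [integral_sub hgf (hg.mul_const m), integral_mul_const, hg₀, zero_mul, sub_zero]
  rw [hcentered, ← Real.norm_eq_abs]
  refine norm_setIntegral_le_of_norm_le_const hs fun x hx => ?_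
  rw [Real.norm_eq_abs, abs_mul]
  exact mul_le_mul (hgG x hx) (hfE x hx) (abs_nonneg _) ((abs_nonneg _).trans (hgG x hx))

theorem abs_div_le_div_of_abs_le_mul {N D a b V : ℝ} (hb : 0 < b) (hV : 0 < V)
    (hN : |N| ≤ a * V) (hD : b * V ≤ D) : |N / D| ≤ a / b := by
  have hD₀ : 0 < D := (mul_pos hb hV).trans_le hD
  rw [abs_div, abs_of_pos hD₀]
  calc |N| / D ≤ a * V / (b * V) := div_le_div₀ ((abs_nonneg N).trans hN) hN (by positivity) hD
    _ = a / b := mul_div_mul_right a b hV.ne'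

section Cube

variable {ι : Type*} [Fintype ι]

theorem Icc_sub_add_eq_closedBall (c : ι → ℝ) {r : ℝ} (hr : 0 ≤ r) :
    Icc (fun k => c k - r) (fun k => c k + r) = closedBall c r := by
  rw [closedBall_pi _ hr, ← pi_univ_Icc]
  simp only [Real.closedBall_eq_Icc]

theorem volume_real_pi_closedBall (c : ι → ℝ) {r : ℝ} (hr : 0 ≤ r) :
    volume.real (closedBall c r) = (2 * r) ^ Fintype.card ι := by
  rw [measureReal_def, Real.volume_pi_closedBall c hr, ENNReal.toReal_ofReal (by positivity)]

theorem abs_sub_div_mul_sub_div_le_of_mem_closedBall {c x : ι → ℝ} {h : ℝ} (hh : 0 < h)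
    (hx : x ∈ closedBall c (h / 2)) (k l : ι) :
    |(x k - c k) / h * ((x l - c l) / h)| ≤ 1 / 2 * (1 / 2) := by
  have hhalf (k : ι) : |(x k - c k) / h| ≤ 1 / 2 := by
    have hk : |x k - c k| ≤ h / 2 := (dist_le_pi_dist x c k).trans (mem_closedBall.mp hx)
    rw [abs_div, abs_of_pos hh, div_le_iff₀ hh]
    linarith
  rw [abs_mul]
  exact mul_le_mul (hhalf k) (hhalf l) (abs_nonneg _) (by norm_num)

end Cube

theorem stmt_8 (d : ℕ) (h Lμ μm : ℝ) (hh : 0 < h) (hLμ : 0 ≤ Lμ) (hμm : 0 < μm)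
    (c : Fin d → ℝ) (μ : (Fin d → ℝ) → ℝ)
    (B : Set (Fin d → ℝ))
    (hB : B = Icc (fun j => c j - h / 2) (fun j => c j + h / 2))
    (hlip : ∀ x x' : Fin d → ℝ, |μ x - μ x'| ≤ Lμ * ‖x - x'‖)
    (hlow : ∀ x ∈ B, μm ≤ μ x)
    (i j : Fin d) (hij : i ≠ j) :
    |(∫ x in B, ((x i - c i) / h) * ((x j - c j) / h) * μ x) / (∫ x in B, μ x)|
      ≤ Lμ * h / (8 * μm) := by
  have hr : 0 ≤ h / 2 := by positivity
  obtain rfl : B = closedBall c (h / 2) := hB.trans (Icc_sub_add_eq_closedBall c hr)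
  have hvol : volume.real (closedBall c (h / 2)) = h ^ d := by
    rw [volume_real_pi_closedBall c hr, Fintype.card_fin, mul_div_cancel₀ h two_ne_zero]
  have hμ : Continuous μ :=
    (LipschitzWith.of_dist_le_mul (K := ⟨Lμ, hLμ⟩) fun x x' => hlip x x').continuous
  have hint {f : (Fin d → ℝ) → ℝ} (hf : Continuous f) : IntegrableOn f (closedBall c (h / 2)) :=
    hf.continuousOn.integrableOn_compact (isCompact_closedBall c _)
  have hodd : ∫ x in closedBall c (h / 2), (x i - c i) / h * ((x j - c j) / h) = 0 :=
    setIntegral_closedBall_eq_zero_of_reflectCoord i c hr fun x => by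
      simp only [reflectCoord_apply, ↓reduceIte, if_neg hij.symm]
      ring
  have hnum := abs_setIntegral_mul_le_of_setIntegral_eq_zero (m := μ c)
    measure_closedBall_lt_top (hint (by fun_prop)) (hint (by fun_prop)) hodd
    (fun x hx => abs_sub_div_mul_sub_div_le_of_mem_closedBall hh hx i j)
    (fun x hx => (hlip x c).trans
      (mul_le_mul_of_nonneg_left (mem_closedBall_iff_norm.mp hx) hLμ))
  have hden := setIntegral_ge_of_const_le_real measurableSet_closedBall
    measure_closedBall_lt_top.ne hlow (hint hμ)
  rw [hvol] at hnum hden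
  calc _ ≤ 1 / 2 * (1 / 2) * (Lμ * (h / 2)) / μm :=
        abs_div_le_div_of_abs_le_mul hμm (by positivity) hnum hden
    _ = Lμ * h / (8 * μm) := by ring
end

section
/- Fix ξ ∈ (0,1) and p₁,…,p_m ∈ (0,1) with at least one p_j < ξ. The minimum of V(η,w) = −ηξ + Σ_j log(1 + (e^{η w_j} − 1)p_j) over η ≥ 0, w_j ≥ 0, Σ w_j = 1, is attained with η* = Σ_{j:p_j<ξ}(log ξ + log(1−p_j) − log p_j − log(1−ξ)), w_j* = (log ξ + log(1−p_j) − log p_j − log(1−ξ))/η* for p_j < ξ and w_j* = 0 otherwise, and V(η*,w*) = Σ_{j:p_j<ξ}(ξ log p_j + (1−ξ)log(1−p_j) − ξ log ξ − (1−ξ)log(1−ξ)). -/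
open Real Finset

private lemma key_ineq (p ξ t : ℝ) (hp0 : 0 < p) (hp1 : p < 1) (hξ0 : 0 < ξ) (hξ1 : ξ < 1)
    (ht : 0 ≤ t) :
    (if p < ξ then ξ * Real.log p + (1 - ξ) * Real.log (1 - p)
        - ξ * Real.log ξ - (1 - ξ) * Real.log (1 - ξ) else 0)
      ≤ -ξ * t + Real.log (1 - p + p * Real.exp t) := by
  have h1p : 0 < 1 - p := by linarith
  have h1ξ : 0 < 1 - ξ := by linarith
  have hX : 0 < 1 - p + p * Real.exp t := by positivity
  split_ifs with hcase
  · -- p < ξ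
    have ha : (0:ℝ) < (1 - p) / (1 - ξ) := by positivity
    have hb : (0:ℝ) < p * Real.exp t / ξ := by positivity
    have hA := Real.geom_mean_le_arith_mean2_weighted (le_of_lt h1ξ) (le_of_lt hξ0)
      (le_of_lt ha) (le_of_lt hb) (by ring)
    have hR : (1 - ξ) * ((1 - p) / (1 - ξ)) + ξ * (p * Real.exp t / ξ)
        = 1 - p + p * Real.exp t := by field_simp
    rw [hR] at hA
    have hL : Real.log (((1 - p) / (1 - ξ)) ^ (1 - ξ) * (p * Real.exp t / ξ) ^ ξ)
        = (1 - ξ) * (Real.log (1 - p) - Real.log (1 - ξ))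
          + ξ * (Real.log p + t - Real.log ξ) := by
      rw [Real.log_mul (by positivity) (by positivity), Real.log_rpow ha, Real.log_rpow hb,
        Real.log_div (by linarith) (by linarith),
        Real.log_div (by positivity) (by linarith),
        Real.log_mul (by linarith) (Real.exp_ne_zero t), Real.log_exp]
    have hlog := Real.log_le_log (by positivity) hA
    rw [hL] at hlog
    nlinarith [hlog]
  · -- ξ ≤ p
    have hξp : ξ ≤ p := le_of_not_gt hcase
    have hA := Real.geom_mean_le_arith_mean2_weighted (le_of_lt h1p) (le_of_lt hp0)
      (zero_le_one) (le_of_lt (Real.exp_pos t)) (by ring)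
    rw [Real.one_rpow, one_mul, mul_one] at hA
    have he : Real.exp t ^ p = Real.exp (t * p) := by
      rw [← Real.exp_mul]
    rw [he] at hA
    have h2 : t * p ≤ Real.log (1 - p + p * Real.exp t) :=
      (Real.le_log_iff_exp_le hX).2 hA
    have h3 : ξ * t ≤ t * p := by nlinarith
    linarith

theorem stmt_15 (m : ℕ) (hm : 1 ≤ m) (ξ : ℝ) (hξ0 : 0 < ξ) (hξ1 : ξ < 1)
    (p : Fin m → ℝ) (hp : ∀ j, 0 < p j ∧ p j < 1)
    (hex : ∃ j, p j < ξ)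
    (V : ℝ → (Fin m → ℝ) → ℝ)
    (hV : ∀ η w, V η w =
      -η * ξ + ∑ j, Real.log (1 + (Real.exp (η * w j) - 1) * p j))
    (ηs : ℝ)
    (hηs : ηs = ∑ j, if p j < ξ then
      Real.log ξ + Real.log (1 - p j) - Real.log (p j) - Real.log (1 - ξ) else 0)
    (ws : Fin m → ℝ)
    (hws : ∀ j, ws j = if p j < ξ then
      (Real.log ξ + Real.log (1 - p j) - Real.log (p j) - Real.log (1 - ξ)) / ηs else 0) :
    (0 ≤ ηs) ∧ (∀ j, 0 ≤ ws j) ∧ (∑ j, ws j = 1) ∧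
    (∀ η ≥ (0 : ℝ), ∀ w : Fin m → ℝ, (∀ j, 0 ≤ w j) → (∑ j, w j = 1) →
      V ηs ws ≤ V η w) ∧
    V ηs ws = ∑ j, if p j < ξ then
      ξ * Real.log (p j) + (1 - ξ) * Real.log (1 - p j)
        - ξ * Real.log ξ - (1 - ξ) * Real.log (1 - ξ) else 0 := by
  have h1ξ : 0 < 1 - ξ := by linarith
  set L : Fin m → ℝ := fun j =>
    Real.log ξ + Real.log (1 - p j) - Real.log (p j) - Real.log (1 - ξ) with hL
  set τ : Fin m → ℝ := fun j => if p j < ξ then L j else 0 with hτ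
  have hLpos : ∀ j, p j < ξ → 0 < L j := by
    intro j hj
    have hp0 := (hp j).1; have hp1 := (hp j).2
    have h1p : 0 < 1 - p j := by linarith
    have hlt : p j * (1 - ξ) < ξ * (1 - p j) := by nlinarith
    have := Real.log_lt_log (by positivity) hlt
    rw [Real.log_mul (by linarith) (by linarith),
      Real.log_mul (by linarith) (by linarith)] at this
    simp only [hL]; linarith
  have hτnn : ∀ j, 0 ≤ τ j := by
    intro j; simp only [hτ]; split_ifs with h
    · exact le_of_lt (hLpos j h)
    · exact le_refl 0
  have hηsτ : ηs = ∑ j, τ j := hηs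
  have hηspos : 0 < ηs := by
    rw [hηsτ]
    obtain ⟨j0, hj0⟩ := hex
    refine Finset.sum_pos' (fun j _ => hτnn j) ⟨j0, Finset.mem_univ j0, ?_⟩
    simp only [hτ, if_pos hj0]; exact hLpos j0 hj0
  have hprod : ∀ j, ηs * ws j = τ j := by
    intro j; rw [hws j]; simp only [hτ]
    split_ifs with h
    · exact mul_div_cancel₀ _ (ne_of_gt hηspos)
    · rw [mul_zero]
  have hwsnn : ∀ j, 0 ≤ ws j := by
    intro j
    have := hτnn j
    rw [← hprod j] at this
    by_contra hc; push_neg at hc; nlinarith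
  have hwssum : ∑ j, ws j = 1 := by
    have : ηs * ∑ j, ws j = ηs * 1 := by
      rw [Finset.mul_sum, mul_one]
      simp only [hprod]
      exact hηsτ.symm
    exact mul_left_cancel₀ (ne_of_gt hηspos) this
  -- value of V at optimum
  have hval : V ηs ws = ∑ j, if p j < ξ then
      ξ * Real.log (p j) + (1 - ξ) * Real.log (1 - p j)
        - ξ * Real.log ξ - (1 - ξ) * Real.log (1 - ξ) else 0 := by
    rw [hV]
    have hterm : ∀ j, Real.log (1 + (Real.exp (ηs * ws j) - 1) * p j)
        = if p j < ξ then Real.log (1 - p j) - Real.log (1 - ξ) else 0 := by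
      intro j
      rw [hprod j]
      have hp0 := (hp j).1; have hp1 := (hp j).2
      have h1p : 0 < 1 - p j := by linarith
      simp only [hτ]
      split_ifs with h
      · have hexp : Real.exp (L j) = ξ * (1 - p j) / (p j * (1 - ξ)) := by
          simp only [hL]
          rw [show Real.log ξ + Real.log (1 - p j) - Real.log (p j) - Real.log (1 - ξ)
              = (Real.log ξ + Real.log (1 - p j)) - (Real.log (p j) + Real.log (1 - ξ)) by ring,
            Real.exp_sub, Real.exp_add, Real.exp_add,
            Real.exp_log hξ0, Real.exp_log h1p, Real.exp_log hp0, Real.exp_log h1ξ]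
        rw [hexp]
        have : 1 + (ξ * (1 - p j) / (p j * (1 - ξ)) - 1) * p j = (1 - p j) / (1 - ξ) := by
          field_simp; ring
        rw [this, Real.log_div (by linarith) (by linarith)]
      · simp
    have hη : -ηs * ξ = ∑ j, -ξ * τ j := by
      rw [← Finset.mul_sum, ← hηsτ]; ring
    rw [hη]
    simp only [hterm]
    rw [← Finset.sum_add_distrib]
    apply Finset.sum_congr rfl
    intro j _
    simp only [hτ]
    split_ifs with h
    · simp only [hL]; ring
    · simp
  refine ⟨le_of_lt hηspos, hwsnn, hwssum, ?_, hval⟩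
  intro η hη w hw hwsum
  rw [hval, hV]
  have hsplit : -η * ξ + ∑ j, Real.log (1 + (Real.exp (η * w j) - 1) * p j)
      = ∑ j, (-ξ * (η * w j) + Real.log (1 - p j + p j * Real.exp (η * w j))) := by
    rw [Finset.sum_add_distrib]
    congr 1
    · have : ∑ j, -ξ * (η * w j) = (-ξ * η) * ∑ j, w j := by
        rw [Finset.mul_sum]
        exact Finset.sum_congr rfl fun j _ => by ring
      rw [this, hwsum]; ring
    · apply Finset.sum_congr rfl; intro j _; congr 1; ring
  rw [hsplit]
  apply Finset.sum_le_sum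
  intro j _
  exact key_ineq (p j) ξ (η * w j) (hp j).1 (hp j).2 hξ0 hξ1
    (mul_nonneg hη (hw j))
end
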